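/- arXiv:2006.13658 — 6 statements merged into one kernel-verified Lean document; each statement's English description precedes it below -/
import Mathlib

section
/- If Φ(y) = φ(y) e^{iθ(y)} with φ real-valued and θ(y) = (c/2)y − (1/4)∫_{-T}^y φ²(η)dη + const, then Φ satisfies −ωΦ − icΦ' + Φ'' + i|Φ|²Φ' = 0 if and only if φ satisfies −φ'' + (ω − c²/4)φ + (c/2)φ³ − (3/16)φ⁵ = 0. -/
/-!
Writing `Φ = φ e^{iθ}`, every derivative of `Φ` is again an amplitude times `e^{iθ}`, with the
amplitude transforming as `u ↦ u' + iθ'u`. Hence the left-hand side of the complex equation is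
`R · e^{iθ}` for an explicit complex amplitude `R` built from `φ, φ', φ''`. The choice
`θ' = c/2 - φ²/4` is exactly what makes the imaginary part of `R` (a multiple of `φ'`) vanish,
and then `R` is minus the real profile equation. Since `e^{iθ}` never vanishes, the two equations
are equivalent.
-/

open Complex

theorem hasDerivAt_mul_cexp_I_mul {u : ℝ → ℂ} {θ : ℝ → ℝ} {u' : ℂ} {b y : ℝ}
    (hu : HasDerivAt u u' y) (hθ : HasDerivAt θ b y) :
    HasDerivAt (fun x => u x * cexp (I * θ x)) ((u' + I * b * u y) * cexp (I * θ y)) y :=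
  (hu.mul (hθ.ofReal_comp.const_mul I).cexp).congr_deriv (by ring)

theorem norm_ofReal_mul_cexp_I_mul (r t : ℝ) : ‖(r : ℂ) * cexp (I * t)‖ = |r| := by
  rw [norm_mul, norm_real, norm_exp_I_mul_ofReal, mul_one, Real.norm_eq_abs]

theorem polar_amplitude_identity (c ω p p₁ p₂ : ℝ) {t : ℝ} (ht : t = c / 2 - p ^ 2 / 4) :
    -(ω : ℂ) * p - I * c * (p₁ + I * t * p)
        + ((p₂ + I * t * p₁ + I * ((-(p * p₁ / 2) : ℝ) : ℂ) * p)
          + I * t * (p₁ + I * t * p))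
        + I * (p : ℂ) ^ 2 * (p₁ + I * t * p)
      = -((-p₂ + (ω - c ^ 2 / 4) * p + (c / 2) * p ^ 3 - (3 / 16) * p ^ 5 : ℝ) : ℂ) := by
  subst ht
  push_cast
  linear_combination
    (-(c : ℂ) * p + p * ((c : ℂ) / 2 - (p : ℂ) ^ 2 / 4) + (p : ℂ) ^ 3)
      * ((c : ℂ) / 2 - (p : ℂ) ^ 2 / 4) * I_sq

/-- With `Φ(y) = φ(y) e^{iθ(y)}`, `θ' = c/2 - φ²/4`, the equation
`-ωΦ - icΦ' + Φ'' + i|Φ|²Φ' = 0` holds iff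
`-φ'' + (ω - c²/4)φ + (c/2)φ³ - (3/16)φ⁵ = 0` holds. -/
theorem polar_reduction (c ω : ℝ) (φ θ : ℝ → ℝ) (Φ : ℝ → ℂ)
    (hφ : ContDiff ℝ 2 φ) (hθ : Differentiable ℝ θ)
    (hθ' : ∀ y, deriv θ y = c / 2 - φ y ^ 2 / 4)
    (hΦ : ∀ y, Φ y = (φ y : ℂ) * Complex.exp (Complex.I * (θ y : ℂ))) :
    (∀ y, -(ω : ℂ) * Φ y - Complex.I * (c : ℂ) * deriv Φ y + deriv (deriv Φ) y
        + Complex.I * (((‖Φ y‖ : ℝ) : ℂ)) ^ 2 * deriv Φ y = 0)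
      ↔ (∀ y, -(deriv (deriv φ) y) + (ω - c ^ 2 / 4) * φ y + (c / 2) * φ y ^ 3
          - (3 / 16) * φ y ^ 5 = 0) := by
  set θ' : ℝ → ℝ := fun y => c / 2 - φ y ^ 2 / 4
  have hφ₁ y : HasDerivAt φ (deriv φ y) y := (hφ.differentiable two_ne_zero y).hasDerivAt
  have hφ₂ y : HasDerivAt (deriv φ) (deriv (deriv φ) y) y :=
    (hφ.differentiable_deriv_two y).hasDerivAt
  have hθ₁ y : HasDerivAt θ (θ' y) y :=
    (hθ y).hasDerivAt.congr_deriv (hθ' y)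
  have hθ₂ y : HasDerivAt θ' (-(φ y * deriv φ y / 2)) y :=
    ((((hφ₁ y).pow 2).div_const 4).const_sub (c / 2)).congr_deriv (by norm_num; ring)
  set ψ : ℝ → ℂ := fun y => ((deriv φ y : ℝ) : ℂ) + I * (θ' y : ℂ) * φ y
  have hΦ₁ : deriv Φ = fun y => ψ y * cexp (I * θ y) := by
    funext y
    rw [funext hΦ]
    exact (hasDerivAt_mul_cexp_I_mul (hφ₁ y).ofReal_comp (hθ₁ y)).deriv
  have hψ y : HasDerivAt ψ (((deriv (deriv φ) y : ℝ) : ℂ)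
      + I * (θ' y : ℂ) * ((deriv φ y : ℝ) : ℂ)
      + I * ((-(φ y * deriv φ y / 2) : ℝ) : ℂ) * φ y) y :=
    ((hφ₂ y).ofReal_comp.add
      (((hθ₂ y).ofReal_comp.const_mul I).mul (hφ₁ y).ofReal_comp)).congr_deriv (by ring)
  have hresidual y : -(ω : ℂ) * Φ y - I * c * deriv Φ y + deriv (deriv Φ) y
      + I * ((‖Φ y‖ : ℝ) : ℂ) ^ 2 * deriv Φ y
      = -((-(deriv (deriv φ) y) + (ω - c ^ 2 / 4) * φ y + (c / 2) * φ y ^ 3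
          - (3 / 16) * φ y ^ 5 : ℝ) : ℂ) * cexp (I * θ y) := by
    rw [hΦ₁, (hasDerivAt_mul_cexp_I_mul (hψ y) (hθ₁ y)).deriv, hΦ y,
      norm_ofReal_mul_cexp_I_mul, ← ofReal_pow, sq_abs]
    have := polar_amplitude_identity c ω (φ y) (deriv φ y) (deriv (deriv φ) y) (t := θ' y) rfl
    push_cast at this ⊢
    linear_combination cexp (I * θ y) * this
  simp only [hresidual, mul_eq_zero, exp_ne_zero, or_false, neg_eq_zero, ofReal_eq_zero]
end

section
/- Suppose ω > 0, ω − c²/4 > 0, and (16/27)(√(c² + 12ω) + 2c)(c² − 12ω − c√(c² + 12ω)) < a < 0. Then the equation R(z) = a, with R(z) = z³ − 4cz² − 16(ω − c²/4)z, has exactly three real roots φ₁ < 0 < φ₂ < φ₃. -/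
/-!
`R(z) = z³ − 4cz² − 16μz` with `μ = ω − c²/4` vanishes at `0`, tends to `∓∞` at `∓∞`, and has
its local minimum at the larger critical point `m = (4c + 2√(c² + 12ω))/3`, a root of
`R'(z) = 3z² − 8cz − 16μ`, where it takes the value `(16/27)(√(c² + 12ω) + 2c)(c² − 12ω − c√(c² + 12ω))`.
Since `μ > 0` forces `m > 0`, the hypotheses give `R(m) < a < 0 = R(0)`, and the intermediate value
theorem yields a root in each of `(-∞, 0)`, `(0, m)` and `(m, ∞)`. A cubic has no further roots.
-/

def cubic {R : Type*} [CommRing R] (p q z : R) : R := z ^ 3 - p * z ^ 2 - q * z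

section Field

variable {K : Type*} [Field K] {p q a x y z x₁ x₂ x₃ : K}

lemma cubic_secant (hxy : x ≠ y) (h : cubic p q x = cubic p q y) :
    x ^ 2 + x * y + y ^ 2 - p * (x + y) - q = 0 := by
  have hfactor : (x - y) * (x ^ 2 + x * y + y ^ 2 - p * (x + y) - q) = 0 := by
    unfold cubic at h
    linear_combination h
  exact (mul_eq_zero.mp hfactor).resolve_left (sub_ne_zero.mpr hxy)

lemma eq_or_eq_or_eq_of_cubic_eq (h₁₂ : x₁ ≠ x₂) (h₁₃ : x₁ ≠ x₃) (h₂₃ : x₂ ≠ x₃)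
    (hx₁ : cubic p q x₁ = a) (hx₂ : cubic p q x₂ = a) (hx₃ : cubic p q x₃ = a)
    (hz : cubic p q z = a) : z = x₁ ∨ z = x₂ ∨ z = x₃ := by
  by_cases hz₁ : z = x₁
  · exact Or.inl hz₁
  have s₁₂ := cubic_secant h₁₂ (hx₁.trans hx₂.symm)
  have s₁₃ := cubic_secant h₁₃ (hx₁.trans hx₃.symm)
  have s₁z := cubic_secant (Ne.symm hz₁) (hx₁.trans hz.symm)
  have hsum : x₁ + x₂ + x₃ = p := by
    have h : (x₂ - x₃) * (x₁ + x₂ + x₃ - p) = 0 := by linear_combination s₁₂ - s₁₃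
    exact sub_eq_zero.mp ((mul_eq_zero.mp h).resolve_left (sub_ne_zero.mpr h₂₃))
  have h : (z - x₂) * (z - x₃) = 0 := by linear_combination s₁z - s₁₂ - (z - x₂) * hsum
  rcases mul_eq_zero.mp h with h | h
  · exact Or.inr (Or.inl (sub_eq_zero.mp h))
  · exact Or.inr (Or.inr (sub_eq_zero.mp h))

end Field

section Ordered

variable {K : Type*} [Field K] [LinearOrder K] [IsStrictOrderedRing K] {p q z : K}

lemma le_cubic (hz : 1 + |p| + |q| ≤ z) : z ≤ cubic p q z := by
  have hquad : 1 ≤ z ^ 2 - p * z - q := by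
    nlinarith [le_abs_self p, le_abs_self q, abs_nonneg p, abs_nonneg q]
  calc z = z * 1 := (mul_one z).symm
    _ ≤ z * (z ^ 2 - p * z - q) := by
        gcongr
        linarith [abs_nonneg p, abs_nonneg q]
    _ = cubic p q z := by unfold cubic; ring

lemma cubic_le (hz : z ≤ -(1 + |p| + |q|)) : cubic p q z ≤ z := by
  have h := le_cubic (p := -p) (q := q) (z := -z) (by rw [abs_neg]; linarith)
  unfold cubic at h ⊢
  linarith

end Ordered

lemma exists_cubic_roots_of_lt {p q a m : ℝ} (hm : 0 < m) (hma : cubic p q m < a) (ha : a < 0) :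
    ∃ x₁ x₂ x₃ : ℝ, x₁ < 0 ∧ 0 < x₂ ∧ x₂ < m ∧ m < x₃ ∧
      cubic p q x₁ = a ∧ cubic p q x₂ = a ∧ cubic p q x₃ = a := by
  have hcont : Continuous (cubic p q) := by unfold cubic; fun_prop
  have h₀ : cubic p q 0 = 0 := by simp [cubic]
  set L := -(1 + |p| + |q| + |a|) with hLdef
  set U := 1 + |p| + |q| + m with hUdef
  have hL : cubic p q L < a := by
    have := cubic_le (p := p) (q := q) (z := L) (by linarith [abs_nonneg a])
    linarith [neg_abs_le a, abs_nonneg p, abs_nonneg q]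
  have hU : a < cubic p q U := by
    have := le_cubic (p := p) (q := q) (z := U) (by linarith)
    linarith [abs_nonneg p, abs_nonneg q]
  obtain ⟨x₁, ⟨-, hx₁⟩, hx₁a⟩ :=
    intermediate_value_Ioo (by linarith [abs_nonneg a, abs_nonneg p, abs_nonneg q] : L ≤ 0)
      hcont.continuousOn (show a ∈ Set.Ioo _ _ from ⟨hL, by rwa [h₀]⟩)
  obtain ⟨x₂, ⟨hx₂, hx₂m⟩, hx₂a⟩ :=
    intermediate_value_Ioo' hm.le hcont.continuousOn (show a ∈ Set.Ioo _ _ from ⟨hma, by rwa [h₀]⟩)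
  obtain ⟨x₃, ⟨hmx₃, -⟩, hx₃a⟩ :=
    intermediate_value_Ioo (by linarith [abs_nonneg p, abs_nonneg q] : m ≤ U)
      hcont.continuousOn (show a ∈ Set.Ioo _ _ from ⟨hma, hU⟩)
  exact ⟨x₁, x₂, x₃, hx₁, hx₂, hx₂m, hmx₃, hx₁a, hx₂a, hx₃a⟩

lemma cubic_local_min_value {c ω s : ℝ} (hs : s ^ 2 = c ^ 2 + 12 * ω) :
    cubic (4 * c) (16 * (ω - c ^ 2 / 4)) ((4 * c + 2 * s) / 3)
      = 16 / 27 * (s + 2 * c) * (c ^ 2 - 12 * ω - c * s) := by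
  unfold cubic
  linear_combination ((8 * s + 16 * c) / 27) * hs

lemma critical_point_pos {c ω s : ℝ} (hμ : 0 < ω - c ^ 2 / 4) (hs₀ : 0 ≤ s)
    (hs : s ^ 2 = c ^ 2 + 12 * ω) : 0 < (4 * c + 2 * s) / 3 := by
  have : -2 * c < s := by nlinarith
  linarith

theorem three_roots_general (ω c a : ℝ) (hμ : 0 < ω - c ^ 2 / 4)
    (ha₁ : (16 / 27) * (Real.sqrt (c ^ 2 + 12 * ω) + 2 * c)
        * (c ^ 2 - 12 * ω - c * Real.sqrt (c ^ 2 + 12 * ω)) < a)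
    (ha₂ : a < 0) :
    ∃ φ₁ φ₂ φ₃ : ℝ, φ₁ < 0 ∧ 0 < φ₂ ∧ φ₂ < φ₃ ∧
      (φ₁ ^ 3 - 4 * c * φ₁ ^ 2 - 16 * (ω - c ^ 2 / 4) * φ₁ = a) ∧
      (φ₂ ^ 3 - 4 * c * φ₂ ^ 2 - 16 * (ω - c ^ 2 / 4) * φ₂ = a) ∧
      (φ₃ ^ 3 - 4 * c * φ₃ ^ 2 - 16 * (ω - c ^ 2 / 4) * φ₃ = a) ∧
      ∀ z : ℝ, z ^ 3 - 4 * c * z ^ 2 - 16 * (ω - c ^ 2 / 4) * z = a →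
        z = φ₁ ∨ z = φ₂ ∨ z = φ₃ := by
  have hs : Real.sqrt (c ^ 2 + 12 * ω) ^ 2 = c ^ 2 + 12 * ω :=
    Real.sq_sqrt (by nlinarith [sq_nonneg c])
  obtain ⟨φ₁, φ₂, φ₃, h₁, h₂, h₂m, hm₃, hφ₁, hφ₂, hφ₃⟩ :=
    exists_cubic_roots_of_lt (critical_point_pos hμ (Real.sqrt_nonneg _) hs)
      ((cubic_local_min_value hs).trans_lt ha₁) ha₂
  refine ⟨φ₁, φ₂, φ₃, h₁, h₂, h₂m.trans hm₃, hφ₁, hφ₂, hφ₃, fun z hz => ?_⟩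
  exact eq_or_eq_or_eq_of_cubic_eq (by linarith) (by linarith) (by linarith) hφ₁ hφ₂ hφ₃ hz

/-- Under the stated conditions, `R(z) = a` has exactly three real roots
`φ₁ < 0 < φ₂ < φ₃`. -/
theorem three_roots (ω c a : ℝ) (hω : 0 < ω) (hμ : 0 < ω - c ^ 2 / 4)
    (ha₁ : (16 / 27) * (Real.sqrt (c ^ 2 + 12 * ω) + 2 * c)
        * (c ^ 2 - 12 * ω - c * Real.sqrt (c ^ 2 + 12 * ω)) < a)
    (ha₂ : a < 0) :
    ∃ φ₁ φ₂ φ₃ : ℝ, φ₁ < 0 ∧ 0 < φ₂ ∧ φ₂ < φ₃ ∧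
      (φ₁ ^ 3 - 4 * c * φ₁ ^ 2 - 16 * (ω - c ^ 2 / 4) * φ₁ = a) ∧
      (φ₂ ^ 3 - 4 * c * φ₂ ^ 2 - 16 * (ω - c ^ 2 / 4) * φ₂ = a) ∧
      (φ₃ ^ 3 - 4 * c * φ₃ ^ 2 - 16 * (ω - c ^ 2 / 4) * φ₃ = a) ∧
      ∀ z : ℝ, z ^ 3 - 4 * c * z ^ 2 - 16 * (ω - c ^ 2 / 4) * z = a →
        z = φ₁ ∨ z = φ₂ ∨ z = φ₃ :=
  three_roots_general ω c a hμ ha₁ ha₂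
end

section
/- The function ϕ(ξ) = [φ₃(φ₂−φ₁) + φ₁(φ₃−φ₂) sn²(ξ/(2g), κ)] / [(φ₂−φ₁) + (φ₃−φ₂) sn²(ξ/(2g), κ)], with g = 2/√(φ₃(φ₂−φ₁)) and κ² = −φ₁(φ₃−φ₂)/(φ₃(φ₂−φ₁)), satisfies the differential equation (ϕ')² = (1/4)ϕ(ϕ₃ − ϕ)(ϕ − φ₂)(ϕ − φ₁). -/
/-!
Writing `w = sn²(ξ / 2g)`, the profile is the Möbius image `ϕ = (A + B w) / (C + E w)` with
`A = φ₃ (φ₂ - φ₁)`, `B = φ₁ (φ₃ - φ₂)`, `C = φ₂ - φ₁`, `E = φ₃ - φ₂`, and `D = C + E w > 0`.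
The choices of `g` and `κ` are exactly those for which the elliptic equation for `sn` becomes
`(w')² = w (1 - w) (A + B w) / 4`. On the other side, the four factors of the quartic are
`ϕ = (A + B w) / D`, `φ₃ - ϕ = (φ₃ - φ₁) E w / D`, `ϕ - φ₂ = C E (1 - w) / D` and
`ϕ - φ₁ = (φ₃ - φ₁) C / D`, so with `dϕ/dw = -(φ₃ - φ₁) C E / D²` both sides of the equation
equal `((φ₃ - φ₁) C E)² w (1 - w) (A + B w) / (4 D⁴)`.
-/

open Real

noncomputable def waveProfile (φ₁ φ₂ φ₃ w : ℝ) : ℝ :=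
  (φ₃ * (φ₂ - φ₁) + φ₁ * (φ₃ - φ₂) * w) / ((φ₂ - φ₁) + (φ₃ - φ₂) * w)

theorem hasDerivAt_mobius {a b c e w : ℝ} (h : c + e * w ≠ 0) :
    HasDerivAt (fun w => (a + b * w) / (c + e * w)) ((b * c - a * e) / (c + e * w) ^ 2) w := by
  have hnum := ((hasDerivAt_id w).const_mul b).const_add a
  have hden := ((hasDerivAt_id w).const_mul e).const_add c
  exact (hnum.div hden h).congr_deriv (by simp only [id, mul_one]; ring)

section waveProfile

variable {φ₁ φ₂ φ₃ w : ℝ}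

theorem hasDerivAt_waveProfile (hD : (φ₂ - φ₁) + (φ₃ - φ₂) * w ≠ 0) :
    HasDerivAt (waveProfile φ₁ φ₂ φ₃)
      (-((φ₃ - φ₁) * (φ₂ - φ₁) * (φ₃ - φ₂)) / ((φ₂ - φ₁) + (φ₃ - φ₂) * w) ^ 2) w :=
  (hasDerivAt_mobius hD).congr_deriv (by ring)

theorem sq_deriv_waveProfile_mul_eq_quartic (hD : (φ₂ - φ₁) + (φ₃ - φ₂) * w ≠ 0) :
    (-((φ₃ - φ₁) * (φ₂ - φ₁) * (φ₃ - φ₂)) / ((φ₂ - φ₁) + (φ₃ - φ₂) * w) ^ 2) ^ 2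
        * (w * (1 - w) * (φ₃ * (φ₂ - φ₁) + φ₁ * (φ₃ - φ₂) * w) / 4)
      = 1 / 4 * waveProfile φ₁ φ₂ φ₃ w * (φ₃ - waveProfile φ₁ φ₂ φ₃ w)
          * (waveProfile φ₁ φ₂ φ₃ w - φ₂) * (waveProfile φ₁ φ₂ φ₃ w - φ₁) := by
  unfold waveProfile
  field_simp
  ring

end waveProfile

theorem hasDerivAt_comp_div_sq {f : ℝ → ℝ} {c ξ : ℝ} (hf : DifferentiableAt ℝ f (ξ / c)) :
    HasDerivAt (fun x => f (x / c) ^ 2) (2 * f (ξ / c) * deriv f (ξ / c) / c) ξ := by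
  have hlin : HasDerivAt (fun x => x / c) (1 / c) ξ := (hasDerivAt_id' ξ).div_const c
  exact ((hf.hasDerivAt.comp ξ hlin).pow 2).congr_deriv
    (by simp only [Function.comp, Nat.cast_ofNat]; ring)

theorem sq_two_mul_mul_div_of_elliptic {A B g κ s d : ℝ} (hA : 0 < A) (hg : g = 2 / √A)
    (hκ : κ ^ 2 = -B / A) (hd : d ^ 2 = (1 - s ^ 2) * (1 - κ ^ 2 * s ^ 2)) :
    (2 * s * d / (2 * g)) ^ 2 = s ^ 2 * (1 - s ^ 2) * (A + B * s ^ 2) / 4 := by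
  have hg2 : g ^ 2 = 4 / A := by rw [hg, div_pow, sq_sqrt hA.le]; norm_num
  rw [div_pow, mul_pow, mul_pow, mul_pow, hd, hκ, hg2]
  field_simp
  ring

/-- The explicit formula satisfies the quadrature equation
`(ϕ')² = (1/4) ϕ (φ₃ - ϕ)(ϕ - φ₂)(ϕ - φ₁)`. -/
theorem wave_ode (φ₁ φ₂ φ₃ g κ : ℝ) (sn : ℝ → ℝ) (ϕ : ℝ → ℝ)
    (h1 : φ₁ < 0) (h2 : 0 < φ₂) (h23 : φ₂ < φ₃)
    (hg : g = 2 / Real.sqrt (φ₃ * (φ₂ - φ₁)))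
    (hκ : κ ^ 2 = -φ₁ * (φ₃ - φ₂) / (φ₃ * (φ₂ - φ₁)))
    (hsn_diff : Differentiable ℝ sn)
    (hsn' : ∀ u, (deriv sn u) ^ 2 = (1 - sn u ^ 2) * (1 - κ ^ 2 * sn u ^ 2))
    (hϕ : ∀ ξ, ϕ ξ = (φ₃ * (φ₂ - φ₁) + φ₁ * (φ₃ - φ₂) * sn (ξ / (2 * g)) ^ 2)
      / ((φ₂ - φ₁) + (φ₃ - φ₂) * sn (ξ / (2 * g)) ^ 2)) :
    ∀ ξ, (deriv ϕ ξ) ^ 2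
      = (1 / 4) * ϕ ξ * (φ₃ - ϕ ξ) * (ϕ ξ - φ₂) * (ϕ ξ - φ₁) := by
  intro ξ
  set s := sn (ξ / (2 * g))
  have hA : 0 < φ₃ * (φ₂ - φ₁) := mul_pos (by linarith) (by linarith)
  have hD : (φ₂ - φ₁) + (φ₃ - φ₂) * s ^ 2 ≠ 0 :=
    (add_pos_of_pos_of_nonneg (by linarith) (mul_nonneg (by linarith) (sq_nonneg s))).ne'
  have hϕ_eq : ϕ = waveProfile φ₁ φ₂ φ₃ ∘ fun x => sn (x / (2 * g)) ^ 2 := funext hϕ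
  have hϕ' := (hasDerivAt_waveProfile hD).comp ξ (hasDerivAt_comp_div_sq (hsn_diff (ξ / (2 * g))))
  rw [hϕ_eq, hϕ'.deriv, mul_pow, Function.comp_apply,
    sq_two_mul_mul_div_of_elliptic hA hg (by rw [hκ, neg_mul]) (hsn' _)]
  exact sq_deriv_waveProfile_mul_eq_quartic hD
end

section
/- Let φ₃ > 0 and φ₁, φ̄₁ be complex conjugate roots with φ₁ + φ̄₁ = 4c − φ₃ for some c < 0. Then for all ϕ ≥ 0, (ϕ − φ₁)(ϕ − φ̄₁) ≥ 4c², and consequently ∫₀^{φ₃} dϕ/√(ϕ(φ₃ − ϕ)(ϕ − φ₁)(ϕ − φ̄₁)) ≤ (1/(2|c|)) ∫₀¹ dx/√(x(1−x)). -/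
/-!
Since `Re φ₁ = 2c - φ₃/2 ≤ 2c ≤ 0`, every `ϕ ≥ 0` satisfies `ϕ - Re φ₁ ≥ 2|c|`, which gives
the lower bound on the quadratic factor. The integrand is then at most
`1 / (2|c| √(ϕ(φ₃ - ϕ)))`, and `∫₀^a dx/√(x(a - x)) = π` for every `a > 0` because
`arcsin (2x/a - 1)` is an antiderivative; so both sides reduce to the same multiple of `π`.
-/

open MeasureTheory Set Real

theorem hasDerivAt_arcsin_two_mul_div_sub_one {a x : ℝ} (hx : x ∈ Ioo 0 a) :
    HasDerivAt (fun x => arcsin (2 * x / a - 1)) (1 / √(x * (a - x))) x := by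
  obtain ⟨hx0, hxa⟩ := hx
  have ha : 0 < a := hx0.trans hxa
  have hlow : 2 * x / a - 1 ≠ -1 := by
    have : 0 < 2 * x / a := by positivity
    linarith
  have hup : 2 * x / a - 1 ≠ 1 := by
    have : 2 * x / a < 2 := by rw [div_lt_iff₀ ha]; linarith
    linarith
  have hinner : HasDerivAt (fun x => 2 * x / a - 1) (2 / a) x := by
    simpa using ((hasDerivAt_id x).const_mul 2).div_const a |>.sub_const 1
  refine ((hasDerivAt_arcsin hlow hup).comp x hinner).congr_deriv ?_
  have hsq : 1 - (2 * x / a - 1) ^ 2 = (2 / a) ^ 2 * (x * (a - x)) := by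
    field_simp; ring
  rw [hsq, sqrt_mul (by positivity), sqrt_sq (by positivity)]
  field_simp

theorem intervalIntegrable_one_div_sqrt_mul_sub {a : ℝ} (ha : 0 < a) :
    IntervalIntegrable (fun x => 1 / √(x * (a - x))) volume 0 a :=
  intervalIntegral.intervalIntegrable_deriv_of_nonneg (by fun_prop)
    (fun x hx => hasDerivAt_arcsin_two_mul_div_sub_one (by simpa [ha.le] using hx))
    (fun x _ => by positivity)

theorem integral_one_div_sqrt_mul_sub {a : ℝ} (ha : 0 < a) :
    ∫ x in 0..a, 1 / √(x * (a - x)) = π := by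
  rw [intervalIntegral.integral_eq_sub_of_hasDerivAt_of_le ha.le (by fun_prop)
    (fun x hx => hasDerivAt_arcsin_two_mul_div_sub_one hx)
    (intervalIntegrable_one_div_sqrt_mul_sub ha)]
  norm_num [mul_div_cancel_right₀ _ ha.ne']

theorem one_div_sqrt_mul_le {p q m : ℝ} (hp : 0 ≤ p) (hm : 0 < m) (hq : m ^ 2 ≤ q) :
    1 / √(p * q) ≤ 1 / m * (1 / √p) := by
  rw [sqrt_mul hp, ← one_div_mul_one_div, mul_comm]
  gcongr
  exact le_sqrt_of_sq_le hq

theorem four_mul_sq_le_sq_sub_add_sq {c r s x : ℝ} (hc : c ≤ 0) (hr : r ≤ 2 * c) (hx : 0 ≤ x) :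
    4 * c ^ 2 ≤ (x - r) ^ 2 + s ^ 2 :=
  calc 4 * c ^ 2 = (-(2 * c)) ^ 2 := by ring
    _ ≤ (x - r) ^ 2 := pow_le_pow_left₀ (by linarith) (by linarith) 2
    _ ≤ (x - r) ^ 2 + s ^ 2 := le_add_of_nonneg_right (sq_nonneg s)

-- Unlike `intervalIntegral.integral_mono_on`, `f` need not be integrable (else its integral is `0`).
theorem intervalIntegral.integral_mono_on_of_nonneg {f g : ℝ → ℝ} {a b : ℝ} (hab : a ≤ b)
    (hf : ∀ x ∈ Ioc a b, 0 ≤ f x) (hg : IntervalIntegrable g volume a b)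
    (hfg : ∀ x ∈ Ioc a b, f x ≤ g x) :
    ∫ x in a..b, f x ≤ ∫ x in a..b, g x := by
  rw [integral_of_le hab, integral_of_le hab]
  exact integral_mono_of_nonneg (ae_restrict_of_forall_mem measurableSet_Ioc hf) hg.1
    (ae_restrict_of_forall_mem measurableSet_Ioc hfg)

theorem period_bound_general (c φ₃ : ℝ) (z : ℂ) (hc : c < 0) (hφ₃ : 0 < φ₃)
    (hsum : z + (starRingEnd ℂ) z = ((4 * c - φ₃ : ℝ) : ℂ)) :
    (∀ ϕ : ℝ, 0 ≤ ϕ → 4 * c ^ 2 ≤ (ϕ - z.re) ^ 2 + z.im ^ 2) ∧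
    (∫ ϕ in (0:ℝ)..φ₃,
        1 / Real.sqrt (ϕ * (φ₃ - ϕ) * ((ϕ - z.re) ^ 2 + z.im ^ 2)))
      ≤ (1 / (2 * |c|)) * ∫ x in (0:ℝ)..1, 1 / Real.sqrt (x * (1 - x)) := by
  have hre : 2 * z.re = 4 * c - φ₃ := by simpa [two_mul] using congrArg Complex.re hsum
  have hlower : ∀ ϕ : ℝ, 0 ≤ ϕ → 4 * c ^ 2 ≤ (ϕ - z.re) ^ 2 + z.im ^ 2 := fun ϕ hϕ =>
    four_mul_sq_le_sq_sub_add_sq hc.le (by linarith) hϕ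
  refine ⟨hlower, ?_⟩
  have hsq : (2 * |c|) ^ 2 = 4 * c ^ 2 := by rw [mul_pow, sq_abs]; ring
  calc (∫ ϕ in (0:ℝ)..φ₃, 1 / √(ϕ * (φ₃ - ϕ) * ((ϕ - z.re) ^ 2 + z.im ^ 2)))
      ≤ ∫ ϕ in (0:ℝ)..φ₃, 1 / (2 * |c|) * (1 / √(ϕ * (φ₃ - ϕ))) :=
        intervalIntegral.integral_mono_on_of_nonneg hφ₃.le (fun _ _ => by positivity)
          ((intervalIntegrable_one_div_sqrt_mul_sub hφ₃).const_mul _)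
          fun ϕ hϕ => one_div_sqrt_mul_le (mul_nonneg hϕ.1.le (sub_nonneg.2 hϕ.2))
            (mul_pos two_pos (abs_pos.2 hc.ne)) (hsq ▸ hlower ϕ hϕ.1.le)
    _ = 1 / (2 * |c|) * π := by
      rw [intervalIntegral.integral_const_mul, integral_one_div_sqrt_mul_sub hφ₃]
    _ = (1 / (2 * |c|)) * ∫ x in (0:ℝ)..1, 1 / √(x * (1 - x)) := by
      rw [integral_one_div_sqrt_mul_sub one_pos]

/-- With complex conjugate roots `φ₁, φ̄₁` satisfying `φ₁ + φ̄₁ = 4c - φ₃` for `c < 0`,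
one has `(ϕ - φ₁)(ϕ - φ̄₁) ≥ 4c²` for `ϕ ≥ 0`, and the resulting bound on the period
integral. -/
theorem period_bound (c φ₃ : ℝ) (z : ℂ) (hc : c < 0) (hφ₃ : 0 < φ₃)
    (hz : z.im ≠ 0) (hsum : z + (starRingEnd ℂ) z = ((4 * c - φ₃ : ℝ) : ℂ)) :
    (∀ ϕ : ℝ, 0 ≤ ϕ → 4 * c ^ 2 ≤ (ϕ - z.re) ^ 2 + z.im ^ 2) ∧
    (∫ ϕ in (0:ℝ)..φ₃,
        1 / Real.sqrt (ϕ * (φ₃ - ϕ) * ((ϕ - z.re) ^ 2 + z.im ^ 2)))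
      ≤ (1 / (2 * |c|)) * ∫ x in (0:ℝ)..1, 1 / Real.sqrt (x * (1 - x)) :=
  period_bound_general c φ₃ z hc hφ₃ hsum
end

section
/- For the matrix operator L = [[L₁, M],[M*, L₂]] with L₁ = −∂_yy + (ω − c²/4) + (3c/2)φ² − (11/16)φ⁴, L₂ = −∂_yy + (ω − c²/4) + (c/2)φ² − (3/16)φ⁴, M = (1/2)φ²∂_y − (1/2)φφ', M* = −(1/2)φ²∂_y − (3/2)φφ', where φ solves −φ'' + (ω − c²/4)φ + (c/2)φ³ − (3/16)φ⁵ = 0, the quadratic form admits the representation ⟨LU, U⟩ = ⟨L₊u₁, u₁⟩ + ∫_{-T}^T [(1/2)φ²u₁ + φ(φ^{-1}u₂)']² dy, where U = (u₁, u₂) are 2T-periodic H¹ functions, L₊ = −∂_yy + (ω − c²/4) + (3c/2)φ² − (15/16)φ⁴, and φ is positive and 2T-periodic. -/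
open MeasureTheory

/-- The operator `L₁` of the matrix linearization. -/
noncomputable def L1op (ω c : ℝ) (φ f : ℝ → ℝ) : ℝ → ℝ := fun y =>
  -(deriv (deriv f) y) + (ω - c ^ 2 / 4) * f y + (3 * c / 2) * φ y ^ 2 * f y
    - (11 / 16) * φ y ^ 4 * f y

/-- The operator `L₂ = L₋` of the matrix linearization. -/
noncomputable def L2op (ω c : ℝ) (φ f : ℝ → ℝ) : ℝ → ℝ := fun y =>
  -(deriv (deriv f) y) + (ω - c ^ 2 / 4) * f y + (c / 2) * φ y ^ 2 * f y
    - (3 / 16) * φ y ^ 4 * f y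

/-- The operator `L₊`. -/
noncomputable def Lplusop (ω c : ℝ) (φ f : ℝ → ℝ) : ℝ → ℝ := fun y =>
  -(deriv (deriv f) y) + (ω - c ^ 2 / 4) * f y + (3 * c / 2) * φ y ^ 2 * f y
    - (15 / 16) * φ y ^ 4 * f y

/-- The off-diagonal operator `M`. -/
noncomputable def Mop (φ f : ℝ → ℝ) : ℝ → ℝ := fun y =>
  (1 / 2) * φ y ^ 2 * deriv f y - (1 / 2) * φ y * deriv φ y * f y

/-- The adjoint off-diagonal operator `M*`. -/
noncomputable def Mstarop (φ f : ℝ → ℝ) : ℝ → ℝ := fun y =>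
  -(1 / 2) * φ y ^ 2 * deriv f y - (3 / 2) * φ y * deriv φ y * f y

lemma aux_c2 {f : ℝ → ℝ} (hf : ContDiff ℝ 2 f) :
    Differentiable ℝ (deriv f) ∧ Continuous (deriv (deriv f)) := by
  have h : ContDiff ℝ 1 (deriv f) := by
    have h2 : ContDiff ℝ (1 + 1) f := by exact_mod_cast hf
    exact (contDiff_succ_iff_deriv.mp h2).2.2
  exact ⟨h.differentiable one_ne_zero, h.continuous_deriv le_rfl⟩

lemma aux_per_deriv {f : ℝ → ℝ} {T : ℝ} (hper : ∀ y, f (y + 2 * T) = f y) (y : ℝ) :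
    deriv f (y + 2 * T) = deriv f y := by
  have h : (fun x => f (x + 2 * T)) = f := funext hper
  rw [← deriv_comp_add_const (a := 2 * T), h]

set_option maxHeartbeats 2000000 in
/-- Representation of the quadratic form `⟨LU,U⟩` as
`⟨L₊u₁,u₁⟩ + ∫ [(1/2)φ²u₁ + φ(φ⁻¹u₂)']²`. -/
theorem quadratic_form_representation (T ω c : ℝ) (hT : 0 < T)
    (φ u₁ u₂ : ℝ → ℝ)
    (hφ : ContDiff ℝ (⊤ : ℕ∞) φ) (hφpos : ∀ y, 0 < φ y)
    (hφper : ∀ y, φ (y + 2 * T) = φ y)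
    (hprofile : ∀ y, -(deriv (deriv φ) y) + (ω - c ^ 2 / 4) * φ y
      + (c / 2) * φ y ^ 3 - (3 / 16) * φ y ^ 5 = 0)
    (hu₁ : ContDiff ℝ 2 u₁) (hu₂ : ContDiff ℝ 2 u₂)
    (hu₁per : ∀ y, u₁ (y + 2 * T) = u₁ y) (hu₂per : ∀ y, u₂ (y + 2 * T) = u₂ y) :
    (∫ y in (-T)..T, (L1op ω c φ u₁ y * u₁ y + Mop φ u₂ y * u₁ y
        + Mstarop φ u₁ y * u₂ y + L2op ω c φ u₂ y * u₂ y))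
      = (∫ y in (-T)..T, Lplusop ω c φ u₁ y * u₁ y)
        + ∫ y in (-T)..T,
            ((1 / 2) * φ y ^ 2 * u₁ y + φ y * deriv (fun x => u₂ x / φ x) y) ^ 2 := by
  have hφne : ∀ y, φ y ≠ 0 := fun y => (hφpos y).ne'
  have hφ2 : ContDiff ℝ 2 φ := hφ.of_le (WithTop.coe_le_coe.mpr le_top)
  obtain ⟨hφ'd, cφ''⟩ := aux_c2 hφ2
  obtain ⟨hu₁'d, cu₁''⟩ := aux_c2 hu₁
  obtain ⟨hu₂'d, cu₂''⟩ := aux_c2 hu₂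
  have cφ : Continuous φ := hφ2.continuous
  have cu₁ : Continuous u₁ := hu₁.continuous
  have cu₂ : Continuous u₂ := hu₂.continuous
  have cφ' : Continuous (deriv φ) := hφ2.continuous_deriv one_le_two
  have cu₁' : Continuous (deriv u₁) := hu₁.continuous_deriv one_le_two
  have cu₂' : Continuous (deriv u₂) := hu₂.continuous_deriv one_le_two
  have hdφ : ∀ x, HasDerivAt φ (deriv φ x) x :=
    fun x => (hφ2.differentiable two_ne_zero x).hasDerivAt
  have hdu₁ : ∀ x, HasDerivAt u₁ (deriv u₁ x) x :=
    fun x => (hu₁.differentiable two_ne_zero x).hasDerivAt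
  have hdu₂ : ∀ x, HasDerivAt u₂ (deriv u₂ x) x :=
    fun x => (hu₂.differentiable two_ne_zero x).hasDerivAt
  have hdφ' : ∀ x, HasDerivAt (deriv φ) (deriv (deriv φ) x) x :=
    fun x => (hφ'd x).hasDerivAt
  have hdu₂' : ∀ x, HasDerivAt (deriv u₂) (deriv (deriv u₂) x) x :=
    fun x => (hu₂'d x).hasDerivAt
  set w : ℝ → ℝ := fun x => (deriv u₂ x * φ x - u₂ x * deriv φ x) / φ x ^ 2 with hwdef
  have hvw : deriv (fun x => u₂ x / φ x) = w :=
    funext fun x => ((hdu₂ x).div (hdφ x) (hφne x)).deriv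
  set W : ℝ → ℝ := fun x =>
    (((deriv (deriv u₂) x * φ x + deriv u₂ x * deriv φ x)
        - (deriv u₂ x * deriv φ x + u₂ x * deriv (deriv φ) x)) * φ x ^ 2
      - (deriv u₂ x * φ x - u₂ x * deriv φ x) * (2 * φ x * deriv φ x)) / (φ x ^ 2) ^ 2
    with hWdef
  have hdw : ∀ x, HasDerivAt w (W x) x := by
    intro x
    have h := (((hdu₂' x).mul (hdφ x)).sub ((hdu₂ x).mul (hdφ' x))).div
      ((hdφ x).pow 2) (pow_ne_zero 2 (hφne x))
    refine (h.congr_of_eventuallyEq (Filter.Eventually.of_forall fun y => by simp [hwdef])).congr_deriv ?_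
    simp [hWdef]
  set G : ℝ → ℝ := fun x => -(1/2) * (φ x ^ 2 * u₁ x * u₂ x) - φ x * w x * u₂ x with hGdef
  set g : ℝ → ℝ := fun x =>
    -(1/2) * ((2 * φ x * deriv φ x * u₁ x + φ x ^ 2 * deriv u₁ x) * u₂ x
        + φ x ^ 2 * u₁ x * deriv u₂ x)
      - ((deriv φ x * w x + φ x * W x) * u₂ x + φ x * w x * deriv u₂ x) with hgdef
  have hdG : ∀ x, HasDerivAt G (g x) x := by
    intro x
    have h1 := ((((hdφ x).pow 2).mul (hdu₁ x)).mul (hdu₂ x)).const_mul (-(1/2) : ℝ)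
    have h2 := (((hdφ x).mul (hdw x)).mul (hdu₂ x))
    have h := h1.sub h2
    refine (h.congr_of_eventuallyEq (Filter.Eventually.of_forall fun y => by simp [hGdef])).congr_deriv ?_
    simp [hgdef]
  have key : ∀ x, L1op ω c φ u₁ x * u₁ x + Mop φ u₂ x * u₁ x
      + Mstarop φ u₁ x * u₂ x + L2op ω c φ u₂ x * u₂ x
      = (Lplusop ω c φ u₁ x * u₁ x
          + ((1 / 2) * φ x ^ 2 * u₁ x + φ x * w x) ^ 2) + g x := by
    intro x
    have happ : deriv (deriv φ) x
        = (ω - c ^ 2 / 4) * φ x + (c / 2) * φ x ^ 3 - (3 / 16) * φ x ^ 5 := by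
      linarith [hprofile x]
    have ha := hφne x
    simp only [L1op, L2op, Lplusop, Mop, Mstarop, hgdef, hWdef, hwdef]
    rw [happ]
    generalize hA : φ x = a at ha ⊢
    generalize deriv φ x = a'
    generalize deriv (deriv u₁) x = b''
    generalize deriv (deriv u₂) x = p''
    generalize deriv u₁ x = b'
    generalize deriv u₂ x = p'
    generalize u₁ x = b
    generalize u₂ x = p
    field_simp
    ring
  -- continuity
  have cw : Continuous w :=
    ((cu₂'.mul cφ).sub (cu₂.mul cφ')).div (cφ.pow 2) (fun x => pow_ne_zero 2 (hφne x))
  have cW : Continuous W := by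
    apply Continuous.div
    · exact (((cu₂''.mul cφ).add (cu₂'.mul cφ')).sub
        ((cu₂'.mul cφ').add (cu₂.mul cφ''))).mul (cφ.pow 2) |>.sub
        (((cu₂'.mul cφ).sub (cu₂.mul cφ')).mul ((continuous_const.mul cφ).mul cφ'))
    · exact (cφ.pow 2).pow 2
    · exact fun x => pow_ne_zero 2 (pow_ne_zero 2 (hφne x))
  have cg : Continuous g := by
    apply Continuous.sub
    · exact continuous_const.mul ((((((continuous_const.mul cφ).mul cφ').mul cu₁).add
        ((cφ.pow 2).mul cu₁')).mul cu₂).add (((cφ.pow 2).mul cu₁).mul cu₂'))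
    · exact (((cφ'.mul cw).add (cφ.mul cW)).mul cu₂).add ((cφ.mul cw).mul cu₂')
  have cLp : Continuous (fun y => Lplusop ω c φ u₁ y * u₁ y) := by
    unfold Lplusop
    exact ((((cu₁''.neg.add (continuous_const.mul cu₁)).add
      ((continuous_const.mul (cφ.pow 2)).mul cu₁)).sub
      ((continuous_const.mul (cφ.pow 4)).mul cu₁)).mul cu₁)
  have csq : Continuous (fun y => ((1 / 2) * φ y ^ 2 * u₁ y + φ y * w y) ^ 2) :=
    (((continuous_const.mul (cφ.pow 2)).mul cu₁).add (cφ.mul cw)).pow 2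
  -- periodicity of G
  have hGper : G (-T + 2 * T) = G (-T) := by
    simp only [hGdef, hwdef, hφper, hu₁per, hu₂per, aux_per_deriv hφper,
      aux_per_deriv hu₂per]
  have hintg : ∫ y in (-T)..T, g y = 0 := by
    rw [intervalIntegral.integral_eq_sub_of_hasDerivAt (fun x _ => hdG x)
      (cg.intervalIntegrable _ _)]
    have hGTT : G T = G (-T) := by
      have h := hGper
      rwa [show -T + 2 * T = T by ring] at h
    rw [hGTT, sub_self]
  rw [hvw]
  rw [intervalIntegral.integral_congr (g := fun y =>
      ((Lplusop ω c φ u₁ y * u₁ y + ((1 / 2) * φ y ^ 2 * u₁ y + φ y * w y) ^ 2) + g y))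
      (fun y _ => key y),
    intervalIntegral.integral_add (f := fun y => Lplusop ω c φ u₁ y * u₁ y + ((1 / 2) * φ y ^ 2 * u₁ y + φ y * w y) ^ 2) ((cLp.add csq).intervalIntegrable _ _)
      (cg.intervalIntegrable _ _),
    intervalIntegral.integral_add (cLp.intervalIntegrable _ _) (csq.intervalIntegrable _ _),
    hintg, add_zero]
end

section
/- The vectors Ψ₁ = (0, φ) and Ψ₂ = (φ', −(1/4)φ³) lie in the kernel of the matrix operator L = [[L₁, M],[M*, L₂]] (with L₁, L₂, M, M* as defined from the profile φ), i.e. L Ψ₁ = 0 and L Ψ₂ = 0. -/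
/-- The vectors `Ψ₁ = (0, φ)` and `Ψ₂ = (φ', -(1/4)φ³)` lie in the kernel of the
matrix operator `L = [[L₁, M],[M*, L₂]]`. -/
theorem kernel_elements (ω c : ℝ) (φ : ℝ → ℝ) (hφ : ContDiff ℝ (⊤ : ℕ∞) φ)
    (hprofile : ∀ y, -(deriv (deriv φ) y) + (ω - c ^ 2 / 4) * φ y
      + (c / 2) * φ y ^ 3 - (3 / 16) * φ y ^ 5 = 0) :
    (∀ y, L1op ω c φ (fun _ => 0) y + Mop φ φ y = 0) ∧
    (∀ y, Mstarop φ (fun _ => 0) y + L2op ω c φ φ y = 0) ∧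
    (∀ y, L1op ω c φ (deriv φ) y + Mop φ (fun x => -(1 / 4) * φ x ^ 3) y = 0) ∧
    (∀ y, Mstarop φ (deriv φ) y + L2op ω c φ (fun x => -(1 / 4) * φ x ^ 3) y = 0) := by
  have hφ1 : Differentiable ℝ φ := hφ.differentiable (by simp)
  have hdφ1 : Differentiable ℝ (deriv φ) :=
    (contDiff_infty_iff_deriv.mp (hφ.of_le (by simp))).2.differentiable (by simp)
  have hd : ∀ y, HasDerivAt φ (deriv φ y) y := fun y => (hφ1 y).hasDerivAt
  have hdd : ∀ y, HasDerivAt (deriv φ) (deriv (deriv φ) y) y := fun y => (hdφ1 y).hasDerivAt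
  have h2v : ∀ y, deriv (deriv φ) y
      = (ω - c ^ 2 / 4) * φ y + (c / 2) * φ y ^ 3 - (3 / 16) * φ y ^ 5 := by
    intro y; linarith [hprofile y]
  have h2 : deriv (deriv φ)
      = fun y => (ω - c ^ 2 / 4) * φ y + (c / 2) * φ y ^ 3 - (3 / 16) * φ y ^ 5 :=
    funext h2v
  -- third derivative
  have h3v : ∀ y, deriv (deriv (deriv φ)) y
      = (ω - c ^ 2 / 4) * deriv φ y + (c / 2) * (3 * φ y ^ 2 * deriv φ y)
        - (3 / 16) * (5 * φ y ^ 4 * deriv φ y) := by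
    intro y
    rw [h2]
    have H : HasDerivAt (fun y => (ω - c ^ 2 / 4) * φ y + (c / 2) * φ y ^ 3
        - (3 / 16) * φ y ^ 5)
        ((ω - c ^ 2 / 4) * deriv φ y + (c / 2) * (3 * φ y ^ (3 - 1) * deriv φ y)
          - (3 / 16) * (5 * φ y ^ (5 - 1) * deriv φ y)) y := by
      exact (((hd y).const_mul _).add (((hd y).pow 3).const_mul _)).sub
        (((hd y).pow 5).const_mul _)
    rw [H.deriv]
  -- derivatives of f = -(1/4) φ^3
  have hf : ∀ y, HasDerivAt (fun x => -(1 / 4) * φ x ^ 3)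
      (-(1 / 4) * (3 * φ y ^ (3 - 1) * deriv φ y)) y := fun y =>
    ((hd y).pow 3).const_mul (-(1 / 4))
  have hf' : deriv (fun x => -(1 / 4) * φ x ^ 3)
      = fun y => -(3 / 4) * (φ y ^ 2 * deriv φ y) := by
    funext y; rw [(hf y).deriv]; norm_num; ring
  have hff : ∀ y, deriv (deriv (fun x => -(1 / 4) * φ x ^ 3)) y
      = -(3 / 4) * (2 * φ y * deriv φ y * deriv φ y + φ y ^ 2 * deriv (deriv φ) y) := by
    intro y
    rw [hf']
    have H : HasDerivAt (fun y => -(3 / 4) * (φ y ^ 2 * deriv φ y))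
        (-(3 / 4) * ((2 * φ y ^ (2 - 1) * deriv φ y) * deriv φ y
          + φ y ^ 2 * deriv (deriv φ) y)) y :=
      (((hd y).pow 2).mul (hdd y)).const_mul _
    rw [H.deriv]
    norm_num
  refine ⟨?_, ?_, ?_, ?_⟩
  · intro y
    simp only [L1op, Mop, deriv_const', mul_zero, sub_zero]
    simp
    ring
  · intro y
    simp only [Mstarop, L2op, deriv_const']
    simp
    linarith [hprofile y]
  · intro y
    simp only [L1op, Mop]
    rw [h3v y, (hf y).deriv]
    norm_num
    ring
  · intro y
    simp only [Mstarop, L2op]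
    rw [hff y]
    linear_combination (φ y ^ 2 / 4) * h2v y
end
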